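/- Let n ≥ 5 with n ≡ 1 (mod 6), and let x_0,...,x_{n-1} be nonnegative integers (indices modulo n) with x_i ≤ 1 and x_i + x_{i+1} + x_{i+2} ≥ 2 for all i. Then Σ_{i=0}^{n-1} x_i ≥ 2⌊n/3⌋ + 1. -/

import Mathlib

/-! Summing the window condition `2 ≤ x i + x (i + 1) + x (i + 2)` over all `n` positions counts
every `x i` exactly three times, so `2 n ≤ 3 ∑ x i`. For `n = 6 k + 1` this gives
`∑ x i ≥ 4 k + 1 = 2 ⌊n / 3⌋ + 1`. -/

open Finset

theorem ZMod.sum_range_natCast {M : Type*} [AddCommMonoid M] (n : ℕ) [NeZero n]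
    (f : ZMod n → M) : ∑ i ∈ range n, f i = ∑ i : ZMod n, f i :=
  sum_nbij' (fun i => (i : ZMod n)) ZMod.val (fun _ _ => mem_univ _)
    (fun j _ => mem_range.mpr (ZMod.val_lt j))
    (fun _ hi => ZMod.val_cast_of_lt (mem_range.mp hi))
    (fun j _ => ZMod.natCast_zmod_val j) (fun _ _ => rfl)

theorem Fintype.sum_three_shifts {G M : Type*} [AddGroup G] [Fintype G] [AddCommMonoid M]
    (x : G → M) (a b : G) : ∑ i, (x i + x (i + a) + x (i + b)) = 3 • ∑ i, x i := by
  have shift (c : G) : ∑ i, x (i + c) = ∑ i, x i := Equiv.sum_comp (Equiv.addRight c) x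
  rw [sum_add_distrib, sum_add_distrib, shift, shift, succ_nsmul, succ_nsmul, one_nsmul]

theorem Fintype.card_nsmul_le_three_nsmul_sum {G M : Type*} [AddGroup G] [Fintype G]
    [AddCommMonoid M] [PartialOrder M] [IsOrderedAddMonoid M] (x : G → M) (a b : G) (m : M)
    (h : ∀ i, m ≤ x i + x (i + a) + x (i + b)) : Fintype.card G • m ≤ 3 • ∑ i, x i :=
  calc Fintype.card G • m = ∑ _i : G, m := by rw [sum_const, card_univ]
    _ ≤ ∑ i, (x i + x (i + a) + x (i + b)) := sum_le_sum fun i _ => h i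
    _ = 3 • ∑ i, x i := Fintype.sum_three_shifts x a b

theorem lower_bound_1_mod_6_general (n : ℕ) (h6 : n % 6 = 1) (x : ZMod n → ℕ)
    (hsum : ∀ i, 2 ≤ x i + x (i + 1) + x (i + 2)) :
    2 * (n / 3) + 1 ≤ ∑ i ∈ Finset.range n, x (i : ZMod n) := by
  have : NeZero n := ⟨by omega⟩
  have hcount := Fintype.card_nsmul_le_three_nsmul_sum x 1 2 2 hsum
  rw [ZMod.card, smul_eq_mul, smul_eq_mul] at hcount
  rw [ZMod.sum_range_natCast]
  omega

theorem lower_bound_1_mod_6 (n : ℕ) (hn : 5 ≤ n) (h6 : n % 6 = 1) (x : ZMod n → ℕ)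
    (hle : ∀ i, x i ≤ 1) (hsum : ∀ i, 2 ≤ x i + x (i + 1) + x (i + 2)) :
    2 * (n / 3) + 1 ≤ ∑ i ∈ Finset.range n, x (i : ZMod n) :=
  lower_bound_1_mod_6_general n h6 x hsum
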